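/- Let S = CS(7) be the commutative semigroup of order 3 with multiplication e_1 x = x e_1 = e_1 for all x, e_2 e_2 = e_2, e_2 e_3 = e_3 e_2 = e_3, and e_3 e_3 = e_1. A k-linear operator P on k[S] is a Rota-Baxter operator of weight zero if and only if its matrix C_P equals [[a, 0, -a], [b, 0, -b], [a, 0, -a]] for some a, b in k. -/

import Mathlib

namespace Stmt10

inductive S : Type
  | e1 | e2 | e3
  deriving DecidableEq

open S

instance : Fintype S := ⟨{e1, e2, e3}, fun x => by cases x <;> simp⟩

/-- Multiplication table of the semigroup. -/
instance : Mul S := ⟨fun a b => match a, b with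
  | e1, e1 => e1
  | e1, e2 => e1
  | e1, e3 => e1
  | e2, e1 => e1
  | e2, e2 => e2
  | e2, e3 => e3
  | e3, e1 => e1
  | e3, e2 => e3
  | e3, e3 => e1⟩

instance : Semigroup S := { mul_assoc := by decide }

/-- The 3×3 matrix (rows = first index) as a function `S → S → k`. -/
def mat3 {k : Type*} (a11 a12 a13 a21 a22 a23 a31 a32 a33 : k) : S → S → k :=
  fun i j => match i, j with
  | e1, e1 => a11 | e1, e2 => a12 | e1, e3 => a13
  | e2, e1 => a21 | e2, e2 => a22 | e2, e3 => a23
  | e3, e1 => a31 | e3, e2 => a32 | e3, e3 => a33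

end Stmt10

/-! The Rota–Baxter identity is bilinear, so it suffices to check it on pairs of basis elements,
where comparing coefficients turns it into a system of quadratic equations in the entries of
`C_P`. For `CS(7)`, eleven of these equations, taken in a suitable order, each say that the
square of a linear form in the entries vanishes once the relations already found are substituted;
this forces `c₁₃ = -c₁₁`, `c₁₂ = 0`, `c₃₃ = -c₃₁`, `c₃₂ = 0`, `c₂₂ = 0`, `c₂₃ = -c₂₁` and finally
`c₃₁ = c₁₁`. Conversely, the resulting matrices satisfy all the equations by direct computation. -/

def IsRotaBaxter {k A : Type*} [CommSemiring k] [NonUnitalNonAssocSemiring A] [Module k A]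
    (P : A →ₗ[k] A) : Prop :=
  ∀ x y, P x * P y = P (x * P y) + P (P x * y)

theorem eq_of_sub_sq_eq_zero {R : Type*} [CommRing R] [IsDomain R] {a b : R}
    (h : (a - b) ^ 2 = 0) : a = b :=
  sub_eq_zero.mp (pow_eq_zero_iff two_ne_zero |>.mp h)

namespace MonoidAlgebra

variable {k G : Type*} [CommSemiring k] {P : MonoidAlgebra k G →ₗ[k] MonoidAlgebra k G}

theorem isRotaBaxter_iff_single [Mul G] :
    IsRotaBaxter P ↔ ∀ i j : G, P (single i 1) * P (single j 1) =
      P (single i 1 * P (single j 1)) + P (P (single i 1) * single j 1) := by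
  refine ⟨fun h i j => h _ _, fun h x y => ?_⟩
  have single_eq (m : G) (r : k) : single m r = r • single m (1 : k) := by
    rw [smul_single', mul_one]
  induction x using induction_linear with
  | zero => simp
  | add x x' hx hx' => simp only [map_add, add_mul, hx, hx']; abel
  | single i r =>
    induction y using induction_linear with
    | zero => simp
    | add y y' hy hy' => simp only [map_add, mul_add, hy, hy']; abel
    | single j s =>
      simp only [single_eq i r, single_eq j s, map_smul, smul_mul_assoc, mul_smul_comm, h i j,
        smul_add]

variable [Fintype G] {C : G → G → k}

theorem apply_single_of_matrix (hC : ∀ i, P (single i 1) = ∑ j, single j (C i j)) (i : G) (c : k) :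
    P (single i c) = ∑ j, single j (c * C i j) := by
  rw [← mul_one c, ← smul_single', map_smul, hC, Finset.smul_sum]
  simp only [smul_single', mul_one]

variable [Mul G] [DecidableEq G]

/-- Equation `(i, j, t)` is the coefficient of `t` in the Rota–Baxter identity at
`(single i 1, single j 1)` for the operator with `P (single i 1) = ∑ j, single j (C i j)`. -/
def IsRotaBaxterMatrix (C : G → G → k) : Prop :=
  ∀ i j t, ∑ s, ∑ r, (if s * r = t then C i s * C j r else 0) =
    ∑ r, C j r * C (i * r) t + ∑ s, C i s * C (s * j) t

theorem isRotaBaxter_iff_isRotaBaxterMatrix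
    (hC : ∀ i, P (single i 1) = ∑ j, single j (C i j)) :
    IsRotaBaxter P ↔ IsRotaBaxterMatrix C := by
  rw [isRotaBaxter_iff_single]
  refine forall₂_congr fun i j => ?_
  rw [← coeff_inj, Finsupp.ext_iff]
  refine forall_congr' fun t => ?_
  simp only [hC, single_mul_single, Finset.mul_sum, Finset.sum_mul, map_sum,
    apply_single_of_matrix hC, coeff_add, coeff_sum, Finsupp.add_apply, Finsupp.finsetSum_apply,
    coeff_single, Finsupp.single_apply, one_mul, mul_one, Finset.sum_ite_eq', Finset.mem_univ,
    if_true]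
  rw [Finset.sum_comm]

end MonoidAlgebra

namespace Stmt10

open S MonoidAlgebra

theorem S.sum_univ {M : Type*} [AddCommMonoid M] (f : S → M) :
    ∑ s, f s = f e1 + f e2 + f e3 := by
  rw [show (Finset.univ : Finset S) = {e1, e2, e3} from rfl]
  simp [add_assoc]

@[simp] theorem e1_mul (x : S) : e1 * x = e1 := by cases x <;> rfl
@[simp] theorem mul_e1 (x : S) : x * e1 = e1 := by cases x <;> rfl
@[simp] theorem e2_mul_e2 : e2 * e2 = e2 := rfl
@[simp] theorem e2_mul_e3 : e2 * e3 = e3 := rfl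
@[simp] theorem e3_mul_e2 : e3 * e2 = e3 := rfl
@[simp] theorem e3_mul_e3 : e3 * e3 = e1 := rfl

section

variable {k : Type*}

theorem eq_mat3 (C : S → S → k) :
    C = mat3 (C e1 e1) (C e1 e2) (C e1 e3) (C e2 e1) (C e2 e2) (C e2 e3) (C e3 e1) (C e3 e2)
      (C e3 e3) := by
  funext i j
  cases i <;> cases j <;> rfl

theorem mat3_eq_of_isRotaBaxterMatrix [CommRing k] [IsDomain k]
    {c11 c12 c13 c21 c22 c23 c31 c32 c33 : k}
    (h : IsRotaBaxterMatrix (mat3 c11 c12 c13 c21 c22 c23 c31 c32 c33)) :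
    mat3 c11 c12 c13 c21 c22 c23 c31 c32 c33 = mat3 c11 0 (-c11) c21 0 (-c21) c11 0 (-c11) := by
  have e111 := h e1 e1 e1
  have e113 := h e1 e1 e3
  have e112 := h e1 e1 e2
  have e311 := h e3 e1 e1
  have e331 := h e3 e3 e1
  have e332 := h e3 e3 e2
  have e222 := h e2 e2 e2
  have e223 := h e2 e2 e3
  have e221 := h e2 e2 e1
  have e231 := h e2 e3 e1
  have e121 := h e1 e2 e1
  simp only [S.sum_univ, mat3, e1_mul, mul_e1, e2_mul_e2, e2_mul_e3, e3_mul_e2, e3_mul_e3,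
    reduceCtorEq, if_true, if_false, add_zero, zero_add]
    at e111 e113 e112 e311 e331 e332 e222 e223 e221 e231 e121
  obtain rfl : c13 = -c11 := eq_of_sub_sq_eq_zero <| by linear_combination -e111 - e113
  obtain rfl : c12 = 0 := eq_of_sub_sq_eq_zero <| by linear_combination -e112
  obtain rfl : c33 = -c31 := eq_of_sub_sq_eq_zero <| by linear_combination e331 - 2 * e311
  obtain rfl : c32 = 0 := eq_of_sub_sq_eq_zero <| by linear_combination -e332
  obtain rfl : c22 = 0 := eq_of_sub_sq_eq_zero <| by linear_combination -e222
  obtain rfl : c23 = -c21 := eq_of_sub_sq_eq_zero <| by linear_combination e221 + e223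
  obtain rfl : c31 = c11 := eq_of_sub_sq_eq_zero <| by linear_combination e231 - e121
  rfl

theorem isRotaBaxterMatrix_mat3 [CommRing k] (a b : k) :
    IsRotaBaxterMatrix (mat3 a 0 (-a) b 0 (-b) a 0 (-a)) := by
  intro i j t
  cases i <;> cases j <;> cases t <;> simp [S.sum_univ, mat3]

theorem isRotaBaxterMatrix_iff [CommRing k] [IsDomain k] {C : S → S → k} :
    IsRotaBaxterMatrix C ↔ ∃ a b : k, C = mat3 a 0 (-a) b 0 (-b) a 0 (-a) := by
  refine ⟨fun h => ?_, ?_⟩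
  · rw [eq_mat3 C] at h ⊢
    exact ⟨_, _, mat3_eq_of_isRotaBaxterMatrix h⟩
  · rintro ⟨a, b, rfl⟩
    exact isRotaBaxterMatrix_mat3 a b

end

theorem rbo_CS7_general {k : Type*} [Field k]
    (P : MonoidAlgebra k S →ₗ[k] MonoidAlgebra k S) (C : S → S → k)
    (hC : ∀ i, P (MonoidAlgebra.single i 1) = ∑ j, MonoidAlgebra.single j (C i j)) :
    (∀ x y, P x * P y = P (x * P y) + P (P x * y)) ↔
      (∃ a b : k, C = mat3 a 0 (-a) b 0 (-b) a 0 (-a)) :=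
  (isRotaBaxter_iff_isRotaBaxterMatrix hC).trans isRotaBaxterMatrix_iff

theorem rbo_CS7 {k : Type*} [Field k] [CharZero k]
    (P : MonoidAlgebra k S →ₗ[k] MonoidAlgebra k S) (C : S → S → k)
    (hC : ∀ i, P (MonoidAlgebra.single i 1) = ∑ j, MonoidAlgebra.single j (C i j)) :
    (∀ x y, P x * P y = P (x * P y) + P (P x * y)) ↔
      (∃ a b : k, C = mat3 a 0 (-a) b 0 (-b) a 0 (-a)) :=
  rbo_CS7_general P C hC

end Stmt10
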